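/- arXiv:0912.2914 — 4 statements merged into one kernel-verified Lean document; each statement's English description precedes it below -/
import Mathlib

section
/- Let S be a set of n ≥ 2 points in general position in ℝ² and let p and q be two distinct extreme points of the convex hull of S. Then there is an enumeration p_1, …, p_n of S with p_1 = p and p_n = q such that the polygonal path p_1 p_2 ⋯ p_n is simple: for all 1 ≤ i < j ≤ n − 1, the segments [p_i, p_{i+1}] and [p_j, p_{j+1}] are disjoint when j > i + 1, and intersect exactly in the single point p_{i+1} when j = i + 1. -/
open Set

noncomputable section

/-- Points of the plane. -/
abbrev Pt : Type := ℝ × ℝ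

/-- A set of points is in general position if no three distinct points are collinear. -/
def GenPos (S : Set Pt) : Prop :=
  ∀ p ∈ S, ∀ q ∈ S, ∀ r ∈ S, p ≠ q → p ≠ r → q ≠ r → ¬ Collinear ℝ ({p, q, r} : Set Pt)

/-- The cyclic successor of an index. -/
def nextIdx {m : ℕ} (i : Fin m) : Fin m := ⟨((i : ℕ) + 1) % m, Nat.mod_lt _ i.pos⟩

/-- The `i`-th edge of the closed polygonal curve on the vertex sequence `v`. -/
def polyEdge {m : ℕ} (v : Fin m → Pt) (i : Fin m) : Set Pt :=
  segment ℝ (v i) (v (nextIdx i))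

/-- The closed polygonal curve on the vertex sequence `v`. -/
def polyCurve {m : ℕ} (v : Fin m → Pt) : Set Pt := ⋃ i, polyEdge v i

/-- The vertex sequence `v` determines a simple closed polygon: there are at least `3`
pairwise distinct vertices, consecutive edges meet exactly in their common endpoint, and
any two other distinct edges are disjoint. -/
def IsSimplePolygon {m : ℕ} (v : Fin m → Pt) : Prop :=
  3 ≤ m ∧ Function.Injective v ∧
  (∀ i : Fin m, polyEdge v i ∩ polyEdge v (nextIdx i) = {v (nextIdx i)}) ∧
  (∀ i j : Fin m, i ≠ j → j ≠ nextIdx i → i ≠ nextIdx j → polyEdge v i ∩ polyEdge v j = ∅)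

/-- The simple closed polygonal curve on `v` encloses `p`: `p` lies in a bounded
connected component of the complement of the curve. -/
def Encloses {m : ℕ} (v : Fin m → Pt) (p : Pt) : Prop :=
  p ∉ polyCurve v ∧ Bornology.IsBounded (connectedComponentIn (polyCurve v)ᶜ p)

/-- The simple closed polygonal curve on `v` excludes `p`: `p` lies in an unbounded
connected component of the complement of the curve. -/
def Excludes {m : ℕ} (v : Fin m → Pt) (p : Pt) : Prop :=
  p ∉ polyCurve v ∧ ¬ Bornology.IsBounded (connectedComponentIn (polyCurve v)ᶜ p)

/-!
The line `pq` splits `S \ {p, q}` into the points `L` on its left and `R` on its right. The path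
goes from `p` through `L` turning clockwise around `p`, then through `R` turning counterclockwise
around `q`, and ends at `q`. Two non-adjacent edges are separated by a line: the line through `p`
and the first vertex of the later edge if that vertex is in `L`, the line through `q` and the last
vertex of the earlier edge if that vertex is in `R`, and the line `pq` otherwise. The two fans fit
together because `p` is extreme: for `l ∈ L` and `r ∈ R`, `r` comes after `l` clockwise around
`p`, since otherwise `p` would lie in the triangle `q l r`. Adjacent edges meet only in their
common vertex because no three points are collinear.
-/

section Separation

variable {E : Type*} [AddCommGroup E] [Module ℝ E] (ℓ : E →ₗ[ℝ] ℝ) (o : E) {a b c d x : E}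

lemma apply_sub_of_mem_segment (hx : x ∈ segment ℝ a b) :
    ∃ s t : ℝ, 0 ≤ s ∧ 0 ≤ t ∧ s + t = 1 ∧ x = s • a + t • b ∧
      ℓ (x - o) = s * ℓ (a - o) + t * ℓ (b - o) := by
  obtain ⟨s, t, hs, ht, hst, rfl⟩ := hx
  refine ⟨s, t, hs, ht, hst, rfl, ?_⟩
  have : s • a + t • b - o = s • (a - o) + t • (b - o) := by
    rw [smul_sub, smul_sub, sub_add_sub_comm, ← add_smul, hst, one_smul]
  simp [this]

lemma eq_left_of_mem_segment_of_apply_nonpos (ha : 0 ≤ ℓ (a - o)) (hb : 0 < ℓ (b - o))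
    (hx : x ∈ segment ℝ a b) (hxo : ℓ (x - o) ≤ 0) : x = a := by
  obtain ⟨s, t, hs, ht, hst, rfl, hℓ⟩ := apply_sub_of_mem_segment ℓ o hx
  obtain rfl : t = 0 := by nlinarith [mul_nonneg hs ha]
  obtain rfl : s = 1 := by linarith
  simp

lemma disjoint_segment_of_separated (ha : 0 ≤ ℓ (a - o)) (hb : 0 < ℓ (b - o))
    (hc : ℓ (c - o) < 0) (hd : ℓ (d - o) ≤ 0) (had : a ≠ d) :
    Disjoint (segment ℝ a b) (segment ℝ c d) := by
  refine Set.disjoint_left.mpr fun x hab hcd ↦ had ?_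
  obtain ⟨s, t, hs, ht, -, -, hℓ⟩ := apply_sub_of_mem_segment ℓ o hcd
  have hxo : ℓ (x - o) ≤ 0 := by nlinarith [mul_nonpos_of_nonneg_of_nonpos hs hc.le]
  have hxa := eq_left_of_mem_segment_of_apply_nonpos ℓ o ha hb hab hxo
  have hxd := eq_left_of_mem_segment_of_apply_nonpos (-ℓ) o (by simpa using hd)
    (by simpa using hc) (segment_symm ℝ c d ▸ hcd)
    (by rw [hxa, LinearMap.neg_apply, neg_nonpos]; exact ha)
  exact hxa ▸ hxd

lemma segment_inter_segment_eq_singleton (ha : ℓ (a - o) = 0) (hb : ℓ (b - o) = 0)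
    (hc : ℓ (c - o) ≠ 0) : segment ℝ a b ∩ segment ℝ b c = {b} := by
  refine Set.Subset.antisymm (fun x ⟨hab, hbc⟩ ↦ ?_) (by simp [left_mem_segment, right_mem_segment])
  obtain ⟨s, t, -, -, -, -, hℓ⟩ := apply_sub_of_mem_segment ℓ o hab
  rw [ha, hb] at hℓ
  rcases hc.lt_or_gt with hc | hc
  · exact eq_left_of_mem_segment_of_apply_nonpos (-ℓ) o (by simp [hb]) (by simpa using hc) hbc
      (by simp [hℓ])
  · exact eq_left_of_mem_segment_of_apply_nonpos ℓ o hb.ge hc hbc (by simp [hℓ])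

end Separation

theorem Finset.exists_range_eq_strictMono_comp {α β : Type*} [LinearOrder β] (s : Finset α)
    {f : α → β} (hf : Set.InjOn f s) :
    ∃ e : Fin s.card → α, Set.range e = s ∧ StrictMono (f ∘ e) := by
  set g := (s.image f).orderEmbOfFin (Finset.card_image_of_injOn hf)
  have hg (i : Fin s.card) : ∃ x ∈ s, f x = g i :=
    Finset.mem_image.mp ((s.image f).orderEmbOfFin_mem (Finset.card_image_of_injOn hf) i)
  choose e he_mem he_eq using hg
  refine ⟨e, Set.Subset.antisymm ?_ fun x hx ↦ ?_, fun i j hij ↦ ?_⟩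
  · rintro _ ⟨i, rfl⟩
    exact he_mem i
  · obtain ⟨i, hi⟩ : f x ∈ Set.range g := by
      rw [Finset.range_orderEmbOfFin]
      exact Finset.mem_coe.mpr (Finset.mem_image_of_mem f hx)
    exact ⟨i, hf (he_mem i) hx ((he_eq i).trans hi)⟩
  · simp only [Function.comp_apply, he_eq]
    exact g.strictMono hij

namespace PolygonalPath

def cross (u v : Pt) : ℝ := u.1 * v.2 - u.2 * v.1

def crossLin (u : Pt) : Pt →ₗ[ℝ] ℝ where
  toFun := cross u
  map_add' _ _ := by simp only [cross, Prod.fst_add, Prod.snd_add]; ring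
  map_smul' _ _ := by
    simp only [cross, Prod.smul_fst, Prod.smul_snd, smul_eq_mul, RingHom.id_apply]; ring

@[simp]
lemma cross_self (u : Pt) : cross u u = 0 := by
  simp [cross, mul_comm]

@[simp]
lemma cross_zero_right (u : Pt) : cross u 0 = 0 := by
  simp [cross]

lemma cross_swap (u v : Pt) : cross v u = -cross u v := by
  simp only [cross]; ring

lemma cross_sub_sub_swap (p q x : Pt) : cross (p - q) (x - q) = -cross (q - p) (x - p) := by
  simp only [cross, Prod.fst_sub, Prod.snd_sub]; ring

lemma ne_of_cross_ne_zero_left {o x v : Pt} (h : cross (x - o) v ≠ 0) : x ≠ o := by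
  rintro rfl
  simp [cross] at h

lemma ne_of_cross_ne_zero_right {o u x : Pt} (h : cross u (x - o) ≠ 0) : x ≠ o := by
  rintro rfl
  simp [cross] at h

lemma ne_of_cross_sub_ne_zero {o x y : Pt} (h : cross (x - o) (y - o) ≠ 0) : y ≠ x := by
  rintro rfl
  exact h (cross_self _)

lemma sq_add_sq_pos {u : Pt} (hu : u ≠ 0) : 0 < u.1 ^ 2 + u.2 ^ 2 := by
  have : u.1 ≠ 0 ∨ u.2 ≠ 0 := by
    contrapose! hu
    exact Prod.ext hu.1 hu.2
  rcases this with h | h <;> positivity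

lemma collinear_of_cross_eq_zero {o x y : Pt} (h : cross (x - o) (y - o) = 0) :
    Collinear ℝ ({o, x, y} : Set Pt) := by
  rcases eq_or_ne x o with rfl | hxo
  · simpa using collinear_pair ℝ x y
  have hnorm := sq_add_sq_pos (sub_ne_zero.mpr hxo)
  rw [collinear_iff_of_mem (Set.mem_insert o _)]
  refine ⟨x - o, ?_⟩
  simp only [Set.mem_insert_iff, Set.mem_singleton_iff, forall_eq_or_imp, forall_eq]
  refine ⟨⟨0, by simp⟩, ⟨1, by simp⟩,
    ⟨((x - o).1 * (y - o).1 + (x - o).2 * (y - o).2) / ((x - o).1 ^ 2 + (x - o).2 ^ 2), ?_⟩⟩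
  rw [cross] at h
  rw [vadd_eq_add, ← sub_eq_iff_eq_add]
  generalize x - o = a at *
  generalize y - o = b at *
  ext <;> simp only [Prod.smul_fst, Prod.smul_snd, smul_eq_mul] <;> field_simp
  · linear_combination -a.2 * h
  · linear_combination a.1 * h

lemma cross_sub_ne_zero {S : Set Pt} (hgp : GenPos S) {o x y : Pt} (ho : o ∈ S) (hx : x ∈ S)
    (hy : y ∈ S) (hox : o ≠ x) (hoy : o ≠ y) (hxy : x ≠ y) : cross (x - o) (y - o) ≠ 0 :=
  fun h ↦ hgp o ho x hx y hy hox hoy hxy (collinear_of_cross_eq_zero h)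

lemma segment_inter_segment_eq_singleton_of_genPos {S : Set Pt} (hgp : GenPos S) {a b c : Pt}
    (ha : a ∈ S) (hb : b ∈ S) (hc : c ∈ S) (hab : a ≠ b) (hac : a ≠ c) (hbc : b ≠ c) :
    segment ℝ a b ∩ segment ℝ b c = {b} :=
  segment_inter_segment_eq_singleton (crossLin (a - b)) b (cross_self _) (by simp [crossLin])
    (cross_sub_ne_zero hgp hb ha hc hab.symm hbc hac)

/-- Minus the cotangent of the angle from `u` to `x - o`: it increases with the angle on
`(0, π)`. -/
def angleKey (o u x : Pt) : ℝ := -(u.1 * (x - o).1 + u.2 * (x - o).2) / cross u (x - o)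

lemma angleKey_lt_angleKey_iff {o u x y : Pt} (hx : 0 < cross u (x - o))
    (hy : 0 < cross u (y - o)) : angleKey o u x < angleKey o u y ↔ 0 < cross (x - o) (y - o) := by
  have hu := sq_add_sq_pos (u := u) (by rintro rfl; simp [cross] at hx)
  rw [angleKey, angleKey, div_lt_div_iff₀ hx hy, ← sub_pos]
  generalize x - o = a at *
  generalize y - o = b at *
  have key : -(u.1 * b.1 + u.2 * b.2) * cross u a - -(u.1 * a.1 + u.2 * a.2) * cross u b =
      (u.1 ^ 2 + u.2 ^ 2) * cross a b := by
    simp only [cross]; ring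
  rw [key, mul_pos_iff_of_pos_left hu]

lemma cross_neg_of_mem_extremePoints {A : Set Pt} (hA : Convex ℝ A) {o o' x y : Pt}
    (ho : o ∈ A.extremePoints ℝ) (ho' : o' ∈ A) (hx : x ∈ A) (hy : y ∈ A)
    (hxo : 0 < cross (o' - o) (x - o)) (hyo : cross (o' - o) (y - o) < 0) :
    cross (x - o) (y - o) < 0 := by
  by_contra! hxy
  set w : Fin 3 → ℝ := ![cross (x - o) (y - o), -cross (o' - o) (y - o), cross (o' - o) (x - o)]
  set z : Fin 3 → Pt := ![o', x, y]
  have hw : ∀ i ∈ Finset.univ, 0 ≤ w i := by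
    intro i _
    fin_cases i
    exacts [hxy, neg_nonneg.mpr hyo.le, hxo.le]
  have hne : ∀ i ∈ Finset.univ, z i ∈ A \ {o} := by
    intro i _
    fin_cases i
    · exact ⟨ho', ne_of_cross_ne_zero_left hxo.ne'⟩
    · exact ⟨hx, ne_of_cross_ne_zero_right hxo.ne'⟩
    · exact ⟨hy, ne_of_cross_ne_zero_right hyo.ne⟩
  have hpos : 0 < ∑ i, w i := by
    rw [Fin.sum_univ_three]
    exact add_pos_of_nonneg_of_pos (add_nonneg hxy (neg_nonneg.mpr hyo.le)) hxo
  -- the plane identity `cross a b • c + cross b c • a + cross c a • b = 0`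
  have hsum : ∑ i, w i • z i = (∑ i, w i) • o := by
    ext <;> simp [w, z, Fin.sum_univ_three, cross] <;> ring
  have hcenter : Finset.univ.centerMass w z = o := by
    rw [Finset.centerMass, hsum, inv_smul_smul₀ hpos.ne']
  exact ((hA.mem_extremePoints_iff_convex_sdiff.mp ho).2.centerMass_mem hw hpos hne).2 hcenter

lemma zero_lt_cross_iff {S : Set Pt} (hgp : GenPos S) {o o' x y : Pt}
    (ho : o ∈ (convexHull ℝ S).extremePoints ℝ) (ho' : o' ∈ S) (hx : x ∈ S) (hy : y ∈ S)
    (hxo : 0 < cross (o' - o) (x - o)) (hyo : y ≠ o) :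
    0 < cross (x - o) (y - o) ↔
      0 < cross (o' - o) (y - o) ∧ angleKey o (o' - o) x < angleKey o (o' - o) y := by
  have hoS : o ∈ S := extremePoints_convexHull_subset ho
  rcases lt_trichotomy (cross (o' - o) (y - o)) 0 with hy' | hy' | hy'
  · have hsub := subset_convexHull ℝ S
    exact iff_of_false (cross_neg_of_mem_extremePoints (convex_convexHull ℝ S) ho (hsub ho')
      (hsub hx) (hsub hy) hxo hy').not_gt fun h ↦ hy'.not_gt h.1
  · obtain rfl : y = o' := by
      by_contra hyo'
      exact cross_sub_ne_zero hgp hoS ho' hy (ne_of_cross_ne_zero_left hxo.ne').symm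
        (Ne.symm hyo) (Ne.symm hyo') hy'
    refine iff_of_false ?_ fun h ↦ h.1.ne' hy'
    rw [cross_swap]
    exact neg_nonpos.mpr hxo.le |>.not_gt
  · rw [angleKey_lt_angleKey_iff hxo hy', and_iff_right hy']

lemma angleKey_injOn {S : Set Pt} (hgp : GenPos S) {o : Pt} (ho : o ∈ S) (u : Pt) :
    Set.InjOn (angleKey o u) {x ∈ S | 0 < cross u (x - o)} := by
  rintro x ⟨hx, hxo⟩ y ⟨hy, hyo⟩ hxy
  by_contra hne
  rcases (cross_sub_ne_zero hgp ho hx hy (ne_of_cross_ne_zero_right hxo.ne').symm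
    (ne_of_cross_ne_zero_right hyo.ne').symm hne).lt_or_gt with h | h
  · rw [← neg_pos, ← cross_swap, ← angleKey_lt_angleKey_iff hyo hxo] at h
    exact h.ne' hxy
  · exact ((angleKey_lt_angleKey_iff hxo hyo).mpr h).ne hxy

/-- The position of `x` on the path: first `p`, then the points on the left of `pq` turning
clockwise around `p`, then those on the right turning counterclockwise around `q`, last `q`. -/
def pathKey (p q x : Pt) : Lex (ℕ × ℝ) :=
  if x = p then toLex (0, 0)
  else if x = q then toLex (3, 0)
  else if 0 < cross (q - p) (x - p) then toLex (1, -angleKey p (q - p) x)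
  else toLex (2, angleKey q (p - q) x)

section PathKey

variable {p q x y : Pt}

lemma pathKey_self_le (x : Pt) : pathKey p q p ≤ pathKey p q x := by
  rw [pathKey, if_pos rfl, pathKey]
  split_ifs <;> simp [Prod.Lex.toLex_le_toLex]

lemma pathKey_le_right (hpq : p ≠ q) (x : Pt) : pathKey p q x ≤ pathKey p q q := by
  have hq : pathKey p q q = toLex (3, 0) := by rw [pathKey, if_neg hpq.symm, if_pos rfl]
  rw [hq, pathKey]
  split_ifs <;> simp [Prod.Lex.toLex_le_toLex]

lemma pathKey_of_left (hx : 0 < cross (q - p) (x - p)) :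
    pathKey p q x = toLex (1, -angleKey p (q - p) x) := by
  rw [pathKey, if_neg (ne_of_cross_ne_zero_right hx.ne'),
    if_neg (ne_of_cross_sub_ne_zero hx.ne'), if_pos hx]

lemma pathKey_of_right (hx : 0 < cross (p - q) (x - q)) :
    pathKey p q x = toLex (2, angleKey q (p - q) x) := by
  have hx' : ¬ 0 < cross (q - p) (x - p) := by rw [cross_sub_sub_swap] at hx; linarith
  rw [pathKey, if_neg (ne_of_cross_sub_ne_zero hx.ne'),
    if_neg (ne_of_cross_ne_zero_right hx.ne'), if_neg hx']

lemma nonneg_of_pathKey_lt_of_left (hy : 0 < cross (q - p) (y - p))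
    (hxy : pathKey p q x < pathKey p q y) : 0 ≤ cross (q - p) (x - p) := by
  rw [pathKey_of_left hy, pathKey] at hxy
  split_ifs at hxy with hxp hxq hx
  · simp [hxp]
  · simp [Prod.Lex.toLex_lt_toLex] at hxy
  · exact hx.le
  · simp [Prod.Lex.toLex_lt_toLex] at hxy

lemma nonpos_of_pathKey_lt_of_right (hx : 0 < cross (p - q) (x - q))
    (hxy : pathKey p q x < pathKey p q y) : cross (q - p) (y - p) ≤ 0 := by
  rw [pathKey_of_right hx, pathKey] at hxy
  split_ifs at hxy with hyp hyq hy
  · simp [Prod.Lex.toLex_lt_toLex] at hxy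
  · rw [hyq, cross_self]
  · simp [Prod.Lex.toLex_lt_toLex] at hxy
  · exact not_lt.mp hy

lemma ne_start_of_pathKey_lt (h : pathKey p q x < pathKey p q y) : y ≠ p := by
  rintro rfl
  exact (pathKey_self_le x).not_gt h

lemma ne_end_of_pathKey_lt (hpq : p ≠ q) (h : pathKey p q x < pathKey p q y) : x ≠ q := by
  rintro rfl
  exact (pathKey_le_right hpq y).not_gt h

lemma disjoint_segment_of_pathKey_lt_of_left_of_right {a b c d : Pt}
    (hbl : 0 < cross (q - p) (b - p)) (hcr : 0 < cross (p - q) (c - q))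
    (hab : pathKey p q a < pathKey p q b) (hbc : pathKey p q b < pathKey p q c)
    (hcd : pathKey p q c < pathKey p q d) : Disjoint (segment ℝ a b) (segment ℝ c d) := by
  have h_c : cross (q - p) (c - p) < 0 := by
    rw [cross_sub_sub_swap] at hcr
    linarith
  exact disjoint_segment_of_separated (crossLin (q - p)) p (nonneg_of_pathKey_lt_of_left hbl hab)
    hbl h_c (nonpos_of_pathKey_lt_of_right hcr hcd)
    (ne_of_apply_ne _ (hab.trans (hbc.trans hcd)).ne)

variable {S : Set Pt} (hgp : GenPos S)
include hgp

lemma left_or_right (hp : p ∈ S) (hq : q ∈ S) (hpq : p ≠ q) (hx : x ∈ S) (hxp : x ≠ p)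
    (hxq : x ≠ q) : 0 < cross (q - p) (x - p) ∨ 0 < cross (p - q) (x - q) := by
  rw [cross_sub_sub_swap p q x, neg_pos]
  exact (cross_sub_ne_zero hgp hp hq hx hpq (Ne.symm hxp) (Ne.symm hxq)).lt_or_gt.symm

lemma pathKey_lt_iff_of_left (hp : p ∈ (convexHull ℝ S).extremePoints ℝ) (hq : q ∈ S)
    (hx : x ∈ S) (hxl : 0 < cross (q - p) (x - p)) (hy : y ∈ S) (hyp : y ≠ p) :
    pathKey p q y < pathKey p q x ↔ 0 < cross (x - p) (y - p) := by
  rw [zero_lt_cross_iff hgp hp hq hx hy hxl hyp, pathKey_of_left hxl]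
  by_cases hyl : 0 < cross (q - p) (y - p)
  · simp [pathKey_of_left hyl, Prod.Lex.toLex_lt_toLex, hyl]
  refine iff_of_false ?_ fun h ↦ hyl h.1
  rw [pathKey, if_neg hyp]
  split_ifs <;> simp [Prod.Lex.toLex_lt_toLex]

lemma pathKey_lt_iff_of_right (hp : p ∈ S) (hq : q ∈ (convexHull ℝ S).extremePoints ℝ)
    (hx : x ∈ S) (hxr : 0 < cross (p - q) (x - q)) (hy : y ∈ S) (hyq : y ≠ q) :
    pathKey p q x < pathKey p q y ↔ 0 < cross (x - q) (y - q) := by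
  rw [zero_lt_cross_iff hgp hq hp hx hy hxr hyq, pathKey_of_right hxr]
  by_cases hyp : y = p
  · subst hyp
    simp [pathKey, Prod.Lex.toLex_lt_toLex, cross_self]
  rcases left_or_right hgp hp (extremePoints_convexHull_subset hq)
    (ne_of_cross_ne_zero_left hxr.ne') hy hyp hyq with hyl | hyr
  · rw [cross_sub_sub_swap] at hxr ⊢
    simp [pathKey_of_left hyl, Prod.Lex.toLex_lt_toLex, hyl.le]
  · simp [pathKey_of_right hyr, Prod.Lex.toLex_lt_toLex, hyr]

lemma pathKey_injOn (hp : p ∈ S) (hq : q ∈ S) (hpq : p ≠ q) : Set.InjOn (pathKey p q) S := by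
  intro x hx y hy hxy
  unfold pathKey at hxy
  split_ifs at hxy <;> simp at hxy
  · rw [‹x = p›, ‹y = p›]
  · rw [‹x = q›, ‹y = q›]
  · exact angleKey_injOn hgp hp _ ⟨hx, ‹_›⟩ ⟨hy, ‹_›⟩ hxy
  · have right {z} (hz : z ∈ S) (hzp : z ≠ p) (hzq : z ≠ q) (hzl : ¬ 0 < cross (q - p) (z - p)) :
        0 < cross (p - q) (z - q) :=
      (left_or_right hgp hp hq hpq hz hzp hzq).resolve_left hzl
    exact angleKey_injOn hgp hq _ ⟨hx, right hx ‹_› ‹_› ‹_›⟩ ⟨hy, right hy ‹_› ‹_› ‹_›⟩ hxy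

lemma disjoint_segment_of_pathKey_lt_of_left (hp : p ∈ (convexHull ℝ S).extremePoints ℝ)
    (hq : q ∈ S) {a b c d : Pt} (ha : a ∈ S) (hb : b ∈ S) (hc : c ∈ S) (hd : d ∈ S)
    (hcl : 0 < cross (q - p) (c - p)) (hab : pathKey p q a < pathKey p q b)
    (hbc : pathKey p q b < pathKey p q c) (hcd : pathKey p q c < pathKey p q d) :
    Disjoint (segment ℝ a b) (segment ℝ c d) := by
  have key {y} := pathKey_lt_iff_of_left (y := y) hgp hp hq hc hcl
  have hdp := ne_start_of_pathKey_lt (hab.trans (hbc.trans hcd))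
  have h_a : 0 ≤ cross (c - p) (a - p) := by
    rcases eq_or_ne a p with rfl | hap
    · simp
    · exact ((key ha hap).mp (hab.trans hbc)).le
  have h_d : cross (c - p) (d - p) < 0 :=
    lt_of_le_of_ne (not_lt.mp (mt (key hd hdp).mpr hcd.not_gt))
      (cross_sub_ne_zero hgp (extremePoints_convexHull_subset hp) hc hd
        (ne_of_cross_ne_zero_right hcl.ne').symm hdp.symm (ne_of_apply_ne _ hcd.ne))
  rw [segment_symm ℝ c d]
  exact disjoint_segment_of_separated (crossLin (c - p)) p h_a
    ((key hb (ne_start_of_pathKey_lt hab)).mp hbc) h_d (by simp [crossLin])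
    (ne_of_apply_ne _ (hab.trans hbc).ne)

lemma disjoint_segment_of_pathKey_lt_of_right (hp : p ∈ S)
    (hq : q ∈ (convexHull ℝ S).extremePoints ℝ) (hpq : p ≠ q) {a b c d : Pt} (ha : a ∈ S)
    (hb : b ∈ S) (hc : c ∈ S) (hd : d ∈ S) (hbr : 0 < cross (p - q) (b - q))
    (hab : pathKey p q a < pathKey p q b) (hbc : pathKey p q b < pathKey p q c)
    (hcd : pathKey p q c < pathKey p q d) :
    Disjoint (segment ℝ a b) (segment ℝ c d) := by
  have key {y} := pathKey_lt_iff_of_right (y := y) hgp hp hq hb hbr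
  have haq := ne_end_of_pathKey_lt hpq (hab.trans (hbc.trans hcd))
  have h_d : 0 ≤ cross (b - q) (d - q) := by
    rcases eq_or_ne d q with rfl | hdq
    · simp
    · exact ((key hd hdq).mp (hbc.trans hcd)).le
  have h_a : cross (b - q) (a - q) < 0 :=
    lt_of_le_of_ne (not_lt.mp (mt (key ha haq).mpr hab.not_gt))
      (cross_sub_ne_zero hgp (extremePoints_convexHull_subset hq) hb ha
        (ne_of_cross_ne_zero_right hbr.ne').symm haq.symm (ne_of_apply_ne _ hab.ne'))
  rw [segment_symm ℝ c d]
  exact (disjoint_segment_of_separated (crossLin (b - q)) q h_d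
    ((key hc (ne_end_of_pathKey_lt hpq hcd)).mp hbc) h_a (by simp [crossLin])
    (ne_of_apply_ne _ (hbc.trans hcd).ne')).symm

lemma disjoint_segment_of_pathKey_lt (hp : p ∈ (convexHull ℝ S).extremePoints ℝ)
    (hq : q ∈ (convexHull ℝ S).extremePoints ℝ) (hpq : p ≠ q) {a b c d : Pt} (ha : a ∈ S)
    (hb : b ∈ S) (hc : c ∈ S) (hd : d ∈ S) (hab : pathKey p q a < pathKey p q b)
    (hbc : pathKey p q b < pathKey p q c) (hcd : pathKey p q c < pathKey p q d) :
    Disjoint (segment ℝ a b) (segment ℝ c d) := by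
  have hpS := extremePoints_convexHull_subset hp
  have hqS := extremePoints_convexHull_subset hq
  rcases left_or_right hgp hpS hqS hpq hc (ne_start_of_pathKey_lt (hab.trans hbc))
    (ne_end_of_pathKey_lt hpq hcd) with hcl | hcr
  · exact disjoint_segment_of_pathKey_lt_of_left hgp hp hqS ha hb hc hd hcl hab hbc hcd
  rcases left_or_right hgp hpS hqS hpq hb (ne_start_of_pathKey_lt hab)
    (ne_end_of_pathKey_lt hpq (hbc.trans hcd)) with hbl | hbr
  · exact disjoint_segment_of_pathKey_lt_of_left_of_right hbl hcr hab hbc hcd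
  · exact disjoint_segment_of_pathKey_lt_of_right hgp hpS hq hpq ha hb hc hd hbr hab hbc hcd

end PathKey

end PolygonalPath

open PolygonalPath in
/-- **Simple polygonal path (Proposition 4).** For a set `S` of `n ≥ 2` points in general
position and distinct extreme points `p`, `q` of its convex hull, there is an enumeration of
`S` starting at `p` and ending at `q` whose polygonal path is simple: consecutive edges meet
exactly in their common endpoint and all other pairs of edges are disjoint. -/
theorem simple_polygonal_path (S : Finset Pt) (n : ℕ) (hS : S.card = n) (hn : 2 ≤ n)
    (hgp : GenPos ↑S) (p q : Pt)
    (hp : p ∈ Set.extremePoints ℝ (convexHull ℝ (S : Set Pt)))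
    (hq : q ∈ Set.extremePoints ℝ (convexHull ℝ (S : Set Pt)))
    (hpq : p ≠ q) :
    ∃ e : Fin n → Pt, Function.Injective e ∧ Set.range e = ↑S ∧
      e ⟨0, by omega⟩ = p ∧ e ⟨n - 1, by omega⟩ = q ∧
      ∀ i j : ℕ, (hij : i < j) → (hj : j < n - 1) →
        (j = i + 1 →
          segment ℝ (e ⟨i, by omega⟩) (e ⟨i + 1, by omega⟩) ∩
            segment ℝ (e ⟨j, by omega⟩) (e ⟨j + 1, by omega⟩) = {e ⟨j, by omega⟩}) ∧
        (j ≠ i + 1 →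
          segment ℝ (e ⟨i, by omega⟩) (e ⟨i + 1, by omega⟩) ∩
            segment ℝ (e ⟨j, by omega⟩) (e ⟨j + 1, by omega⟩) = ∅) := by
  subst hS
  have hpS := extremePoints_convexHull_subset hp
  have hqS := extremePoints_convexHull_subset hq
  obtain ⟨e, he_range, he_mono⟩ :=
    S.exists_range_eq_strictMono_comp (pathKey_injOn hgp hpS hqS hpq)
  have he_inj : Function.Injective e := he_mono.injective.of_comp
  have he_mem (i : Fin S.card) : e i ∈ (S : Set Pt) := he_range ▸ Set.mem_range_self i
  have he_lt {i j : Fin S.card} (h : (i : ℕ) < j) : pathKey p q (e i) < pathKey p q (e j) :=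
    he_mono h
  refine ⟨e, he_inj, he_range, ?_, ?_, fun i j hij hj ↦ ⟨?_, fun hne ↦ ?_⟩⟩
  · obtain ⟨k, rfl⟩ : p ∈ Set.range e := he_range ▸ hpS
    have hk : k ≤ ⟨0, by omega⟩ := he_mono.le_iff_le.mp (pathKey_self_le _)
    exact congrArg e (le_antisymm (Nat.zero_le _) hk)
  · obtain ⟨k, rfl⟩ : q ∈ Set.range e := he_range ▸ hqS
    have hk : ⟨S.card - 1, by omega⟩ ≤ k := he_mono.le_iff_le.mp (pathKey_le_right hpq _)
    exact congrArg e (le_antisymm hk (Nat.le_sub_one_of_lt k.isLt))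
  · rintro rfl
    exact segment_inter_segment_eq_singleton_of_genPos hgp (he_mem _) (he_mem _) (he_mem _)
      (he_inj.ne (by simp)) (he_inj.ne (by rw [Ne, Fin.mk.injEq]; omega)) (he_inj.ne (by simp))
  · exact Set.disjoint_iff_inter_eq_empty.mp <| disjoint_segment_of_pathKey_lt hgp hp hq hpq
      (he_mem _) (he_mem _) (he_mem _) (he_mem _) (he_lt (by simp)) (he_lt (by simp; omega))
      (he_lt (by simp))
end
end

section
/- Let B and R be disjoint finite sets in ℝ² with B ∪ R in general position, every point of R lying in the interior of the convex hull of B, and |R| = l ≥ 1. Then there exists a subset B′ of the set of extreme points of the convex hull of B with |B′| ≤ 2l + 1 such that every point of R lies in the convex hull of B′. -/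
/-! Fix an extreme point `b` of `K = conv B`. For a red point `r`, the ray from `b` through `r`
leaves `K` at a frontier point `s`, so `r ∈ [b, s]`. A supporting line of `K` at `s` cuts out an
exposed face whose extreme points are extreme points of `K` on that line; by Carathéodory, `s` is
in the hull of at most two of them. Hence each red point costs two extreme points besides `b`. -/

open Set

noncomputable section

open AffineMap Module

theorem IsPreconnected.inter_frontier_nonempty {X : Type*} [TopologicalSpace X] {s t : Set X}
    (hs : IsPreconnected s) (hst : (s ∩ t).Nonempty) (hst' : (s \ t).Nonempty) :
    (s ∩ frontier t).Nonempty := by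
  by_contra h
  have hcover : s ⊆ interior t ∪ (closure t)ᶜ := fun x hx => by
    by_cases hi : x ∈ interior t
    · exact Or.inl hi
    · exact Or.inr fun hc => h ⟨x, hx, hc, hi⟩
  rcases hs.subset_or_subset isOpen_interior isClosed_closure.isOpen_compl
      (disjoint_compl_right.mono_left interior_subset_closure) hcover with h' | h'
  · obtain ⟨x, hxs, hxt⟩ := hst'
    exact hxt (interior_subset (h' hxs))
  · obtain ⟨x, hxs, hxt⟩ := hst
    exact h' hxs (subset_closure hxt)

theorem collinear_setOf_apply_eq {k V : Type*} [Field k] [AddCommGroup V] [Module k V]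
    (hV : finrank k V = 2) {f : Module.Dual k V} (hf : f ≠ 0) (c : k) :
    Collinear k {x | f x = c} := by
  have : FiniteDimensional k V := Module.finite_of_finrank_pos (by omega)
  have hspan : vectorSpan k {x | f x = c} ≤ LinearMap.ker f := by
    rw [vectorSpan_def, Submodule.span_le]
    rintro _ ⟨x, hx, y, hy, rfl⟩
    simp_all
  rw [collinear_iff_finrank_le_one]
  have := Module.Dual.finrank_ker_add_one_of_ne_zero hf
  have := Submodule.finrank_mono hspan
  omega

theorem Collinear.exists_card_le_two_of_mem_convexHull {k V : Type*} [Field k] [LinearOrder k]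
    [IsStrictOrderedRing k] [AddCommGroup V] [Module k V] {P : Set V} (hP : Collinear k P)
    {x : V} (hx : x ∈ convexHull k P) :
    ∃ t : Finset V, ↑t ⊆ P ∧ t.card ≤ 2 ∧ x ∈ convexHull k (t : Set V) := by
  rw [convexHull_eq_union] at hx
  simp only [mem_iUnion] at hx
  obtain ⟨t, htP, hai, hxt⟩ := hx
  have hcol := hP.subset htP
  have := hcol.finiteDimensional_vectorSpan
  have hcard : t.card ≤ finrank k (vectorSpan k (t : Set V)) + 1 := by
    convert hai.card_le_finrank_succ <;> simp
  exact ⟨t, htP, by linarith [hcol.finrank_le_one], hxt⟩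

section

variable {E : Type*} [NormedAddCommGroup E] [NormedSpace ℝ E]

theorem exists_mem_frontier_mem_segment {K : Set E} (hK : Bornology.IsBounded K) {b r : E}
    (hbr : b ≠ r) (hr : r ∈ K) : ∃ s ∈ frontier K, r ∈ segment ℝ b s := by
  obtain ⟨C, hC⟩ := hK.subset_closedBall b
  have hd : 0 < dist b r := dist_pos.2 hbr
  have hout : lineMap b r (|C| / dist b r + 1) ∉ K := fun h => by
    have := hC h
    rw [Metric.mem_closedBall, dist_lineMap_left, Real.norm_eq_abs,
      abs_of_pos (by positivity), add_mul, div_mul_cancel₀ _ hd.ne'] at this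
    linarith [le_abs_self C]
  have hray : IsPreconnected (lineMap b r '' Ici (1 : ℝ)) :=
    isPreconnected_Ici.image _ (lineMap_continuous (R := ℝ)).continuousOn
  obtain ⟨_, ⟨t, ht, rfl⟩, hs⟩ := hray.inter_frontier_nonempty
    ⟨r, ⟨1, mem_Ici.2 le_rfl, lineMap_apply_one b r⟩, hr⟩
    ⟨_, ⟨_, mem_Ici.2 (le_add_of_nonneg_left (by positivity)), rfl⟩, hout⟩
  refine ⟨_, hs, ?_⟩
  rw [segment_eq_image_lineMap]
  have ht0 : 0 < t := zero_lt_one.trans_le ht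
  refine ⟨t⁻¹, ⟨inv_nonneg.2 ht0.le, inv_le_one_of_one_le₀ ht⟩, ?_⟩
  rw [lineMap_lineMap_right, inv_mul_cancel₀ ht0.ne', lineMap_apply_one]

theorem Convex.exists_isMaxOn_of_notMem_interior {K : Set E} (hK : Convex ℝ K) {r s : E}
    (hr : r ∈ interior K) (hs : s ∉ interior K) :
    ∃ f : StrongDual ℝ E, f r < f s ∧ IsMaxOn f K s := by
  obtain ⟨f, hf⟩ := geometric_hahn_banach_open_point hK.interior isOpen_interior hs
  have hKsub : K ⊆ closure (interior K) := by
    rw [hK.closure_interior_eq_closure_of_nonempty_interior ⟨r, hr⟩]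
    exact subset_closure
  exact ⟨f, hf r hr, fun a ha => closure_minimal (fun x hx => (hf x hx).le)
    (isClosed_le f.continuous continuous_const) (hKsub ha)⟩

theorem IsMaxOn.mem_convexHull_extremePoints_inter {K : Set E} (hKc : IsCompact K)
    (hKcv : Convex ℝ K) (hfin : (K.extremePoints ℝ).Finite) {f : StrongDual ℝ E} {s : E}
    (hs : s ∈ K) (hmax : IsMaxOn f K s) :
    s ∈ convexHull ℝ (K.extremePoints ℝ ∩ {x | f x = f s}) := by
  have hF : IsExposed ℝ K (f.toExposed K) := ContinuousLinearMap.toExposed.isExposed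
  have hsub : (f.toExposed K).extremePoints ℝ ⊆ K.extremePoints ℝ ∩ {x | f x = f s} := by
    rw [hF.isExtreme.extremePoints_eq]
    exact fun x ⟨⟨hxK, hx⟩, hxe⟩ => ⟨hxe, le_antisymm (hmax hxK) (hx s hs)⟩
  have hclosed : IsClosed (convexHull ℝ (K.extremePoints ℝ ∩ {x | f x = f s})) :=
    (hfin.subset inter_subset_left).isCompact_convexHull ℝ |>.isClosed
  rw [← hclosed.closure_eq]
  refine closure_mono (convexHull_mono hsub) ?_
  rw [closure_convexHull_extremePoints (hF.isCompact hKc) (hF.convex hKcv)]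
  exact ⟨hs, hmax⟩

variable (hE : finrank ℝ E = 2) {K : Set E} (hKc : IsCompact K) (hKcv : Convex ℝ K)
  (hfin : (K.extremePoints ℝ).Finite)
include hE hKc hKcv hfin

theorem exists_subset_extremePoints_mem_convexHull_insert {b r : E} (hr : r ∈ interior K) :
    ∃ T ⊆ K.extremePoints ℝ, T.ncard ≤ 2 ∧ r ∈ convexHull ℝ (insert b T) := by
  rcases eq_or_ne b r with rfl | hbr
  · exact ⟨∅, empty_subset _, by simp, subset_convexHull ℝ _ (mem_insert _ _)⟩
  obtain ⟨s, hs, hrs⟩ := exists_mem_frontier_mem_segment hKc.isBounded hbr (interior_subset hr)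
  have hsK : s ∈ K := hKc.isClosed.frontier_subset hs
  obtain ⟨f, hfrs, hmax⟩ := hKcv.exists_isMaxOn_of_notMem_interior hr hs.2
  have hf : (f : E →ₗ[ℝ] ℝ) ≠ 0 := fun h => hfrs.ne (by rw [← f.coe_coe, h]; rfl)
  have hcol : Collinear ℝ (K.extremePoints ℝ ∩ {x | f x = f s}) :=
    (collinear_setOf_apply_eq hE hf (f s)).subset inter_subset_right
  obtain ⟨t, htP, htcard, hst⟩ := hcol.exists_card_le_two_of_mem_convexHull
    (hmax.mem_convexHull_extremePoints_inter hKc hKcv hfin hsK)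
  refine ⟨t, htP.trans inter_subset_left, by rwa [ncard_coe_finset], ?_⟩
  exact (convex_convexHull ℝ _).segment_subset (subset_convexHull ℝ _ (mem_insert _ _))
    (convexHull_mono (subset_insert _ _) hst) hrs

theorem exists_subset_extremePoints_forall_mem_convexHull_insert (b : E) (R : Finset E)
    (hR : ∀ r ∈ R, r ∈ interior K) :
    ∃ T ⊆ K.extremePoints ℝ, T.ncard ≤ 2 * R.card ∧
      ∀ r ∈ R, r ∈ convexHull ℝ (insert b T) := by
  classical
  induction R using Finset.induction_on with
  | empty => exact ⟨∅, empty_subset _, by simp, by simp⟩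
  | insert r R hrR ih =>
    obtain ⟨T, hTK, hTcard, hT⟩ := ih fun x hx => hR x (Finset.mem_insert_of_mem hx)
    obtain ⟨T', hT'K, hT'card, hT'⟩ := exists_subset_extremePoints_mem_convexHull_insert hE hKc
      hKcv hfin (b := b) (hR r (Finset.mem_insert_self r R))
    refine ⟨T ∪ T', union_subset hTK hT'K, ?_, ?_⟩
    · rw [Finset.card_insert_of_notMem hrR]
      linarith [ncard_union_le T T']
    · simp only [Finset.mem_insert, forall_eq_or_imp]
      exact ⟨convexHull_mono (insert_subset_insert subset_union_right) hT',
        fun x hx => convexHull_mono (insert_subset_insert subset_union_left) (hT x hx)⟩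

theorem exists_subset_extremePoints_forall_mem_convexHull (R : Finset E)
    (hR : ∀ r ∈ R, r ∈ interior K) :
    ∃ B' ⊆ K.extremePoints ℝ, B'.ncard ≤ 2 * R.card + 1 ∧
      ∀ r ∈ R, r ∈ convexHull ℝ B' := by
  rcases R.eq_empty_or_nonempty with rfl | ⟨r, hr⟩
  · exact ⟨∅, empty_subset _, by simp, by simp⟩
  obtain ⟨b, hb⟩ := hKc.extremePoints_nonempty ⟨r, interior_subset (hR r hr)⟩
  obtain ⟨T, hTK, hTcard, hT⟩ :=
    exists_subset_extremePoints_forall_mem_convexHull_insert hE hKc hKcv hfin b R hR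
  exact ⟨insert b T, insert_subset hb hTK, (ncard_insert_le b T).trans (by omega), hT⟩

end

theorem smaller_hull_general (B R : Finset Pt)
    (hint : ∀ r ∈ R, r ∈ interior (convexHull ℝ (B : Set Pt)))
    (l : ℕ) (hl : R.card = l) :
    ∃ B' : Set Pt, B' ⊆ Set.extremePoints ℝ (convexHull ℝ (B : Set Pt)) ∧
      B'.ncard ≤ 2 * l + 1 ∧ ∀ r ∈ R, r ∈ convexHull ℝ B' := by
  subst hl
  exact exists_subset_extremePoints_forall_mem_convexHull (by simp)
    (B.finite_toSet.isCompact_convexHull ℝ) (convex_convexHull ℝ _)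
    (B.finite_toSet.subset extremePoints_convexHull_subset) R hint

/-- **Smaller hull (Proposition 5).** If all `l ≥ 1` red points lie in the interior of the
convex hull of `B`, then some set `B'` of at most `2l + 1` extreme points of the hull of `B`
already has all red points in its convex hull. -/
theorem smaller_hull (B R : Finset Pt) (hdisj : Disjoint B R) (hgp : GenPos ↑(B ∪ R))
    (hint : ∀ r ∈ R, r ∈ interior (convexHull ℝ (B : Set Pt)))
    (l : ℕ) (hl : R.card = l) (hl1 : 1 ≤ l) :
    ∃ B' : Set Pt, B' ⊆ Set.extremePoints ℝ (convexHull ℝ (B : Set Pt)) ∧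
      B'.ncard ≤ 2 * l + 1 ∧ ∀ r ∈ R, r ∈ convexHull ℝ B' :=
  smaller_hull_general B R hint l hl
end
end

section
/- For every n ≥ 1 there exist disjoint sets B and R of n points each in ℝ² with B ∪ R in general position such that every simple closed polygonal curve that encloses every point of R and excludes every point of B has at least n vertices. -/
open Set

noncomputable section

/-!
Put the points `(k, k²)`, `0 ≤ k < 2n`, on the parabola `y = x²`, red for even `k` and blue for
odd `k`. Consecutive points have different colours, so one lies in a bounded and the other in an
unbounded component of the complement of the curve: the parabolic arc joining them must meet the
curve. This gives `2n - 1` distinct points of the curve on the parabola. A line meets the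
parabola in at most two points, so each of the `m` edges carries at most two of them, whence
`2n - 1 ≤ 2m`.
-/

theorem inter_nonempty_of_isBounded_connectedComponentIn {X : Type*} [TopologicalSpace X]
    [Bornology X] {C K : Set X} {p q : X} (hK : IsPreconnected K) (hp : p ∈ K) (hq : q ∈ K)
    (hpC : Bornology.IsBounded (connectedComponentIn Cᶜ p))
    (hqC : ¬ Bornology.IsBounded (connectedComponentIn Cᶜ q)) : (K ∩ C).Nonempty := by
  by_contra hKC
  have hKsub : K ⊆ Cᶜ := fun x hx hxC => hKC ⟨x, hx, hxC⟩
  have hpq := connectedComponentIn_eq (hK.subset_connectedComponentIn hp hKsub hq)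
  exact hqC (hpq ▸ hpC)

theorem GenPos.card_le_two_of_subset_segment {S : Set Pt} (hS : GenPos S) {a b : Pt}
    {T : Finset Pt} (hT : ↑T ⊆ S ∩ segment ℝ a b) : T.card ≤ 2 := by
  by_contra! hT2
  obtain ⟨x, hx, y, hy, z, hz, hxy, hxz, hyz⟩ := Finset.two_lt_card.1 hT2
  have hline : ∀ w ∈ T, w ∈ line[ℝ, a, b] := fun w hw =>
    (mem_segment_iff_wbtw.1 (hT hw).2).mem_affineSpan
  exact hS x (hT hx).1 y (hT hy).1 z (hT hz).1 hxy hxz hyz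
    (collinear_triple_of_mem_affineSpan_pair (hline x hx) (hline y hy) (hline z hz))

theorem GenPos.card_le_of_subset_polyCurve {S : Set Pt} (hS : GenPos S) {m : ℕ}
    (v : Fin m → Pt) {T : Finset Pt} (hT : ↑T ⊆ S ∩ polyCurve v) : T.card ≤ 2 * m := by
  classical
  have hcover : T ⊆ Finset.univ.biUnion fun i => T.filter (· ∈ polyEdge v i) := by
    intro x hx
    obtain ⟨i, hi⟩ := mem_iUnion.1 (hT hx).2
    exact Finset.mem_biUnion.2 ⟨i, Finset.mem_univ _, Finset.mem_filter.2 ⟨hx, hi⟩⟩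
  have hedge (i : Fin m) : (T.filter (· ∈ polyEdge v i)).card ≤ 2 :=
    hS.card_le_two_of_subset_segment fun x hx =>
      ⟨(hT (Finset.mem_filter.1 hx).1).1, (Finset.mem_filter.1 hx).2⟩
  calc T.card ≤ ∑ i, (T.filter (· ∈ polyEdge v i)).card :=
        (Finset.card_le_card hcover).trans Finset.card_biUnion_le
    _ ≤ ∑ _i : Fin m, 2 := Finset.sum_le_sum fun i _ => hedge i
    _ = 2 * m := by simp [mul_comm]

def parabola : Set Pt := {p | p.2 = p.1 ^ 2}

theorem eq_or_eq_of_mem_segment_of_mem_parabola {x y z : Pt} (hx : x ∈ parabola)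
    (hy : y ∈ parabola) (hz : z ∈ parabola) (hseg : y ∈ segment ℝ x z) : y = x ∨ y = z := by
  obtain ⟨a, b, ha, hb, hab, rfl⟩ := hseg
  simp only [parabola, mem_ofPred_eq, Prod.fst_add, Prod.snd_add, Prod.smul_fst,
    Prod.smul_snd, smul_eq_mul] at hx hy hz
  -- strict convexity of `t ↦ t²`: the chord lies above the graph by `a b (x₁ - z₁)²`
  have hgap : a * b * (x.1 - z.1) ^ 2 = 0 := by
    linear_combination (-a) * hx + (-b) * hz + hy + (a * x.1 ^ 2 + b * z.1 ^ 2) * hab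
  rcases mul_eq_zero.1 hgap with hab0 | hsq
  · rcases mul_eq_zero.1 hab0 with rfl | rfl
    · right
      simp [show b = 1 by linarith]
    · left
      simp [show a = 1 by linarith]
  · have hXZ : x.1 = z.1 := sub_eq_zero.1 (pow_eq_zero_iff two_ne_zero |>.1 hsq)
    obtain rfl : x = z := Prod.ext hXZ (by rw [hx, hz, hXZ])
    left
    rw [← add_smul, hab, one_smul]

theorem genPos_parabola : GenPos parabola := by
  intro p hp q hq r hr hpq hpr hqr hcol
  have hseg {x y z : Pt} (hx : x ∈ parabola) (hy : y ∈ parabola) (hz : z ∈ parabola)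
      (h : Wbtw ℝ x y z) : y = x ∨ y = z :=
    eq_or_eq_of_mem_segment_of_mem_parabola hx hy hz (mem_segment_iff_wbtw.2 h)
  rcases hcol.wbtw_or_wbtw_or_wbtw with h | h | h
  · rcases hseg hp hq hr h with h' | h' <;> simp_all
  · rcases hseg hq hr hp h with h' | h' <;> simp_all
  · rcases hseg hr hp hq h with h' | h' <;> simp_all

def parabolaPt (t : ℝ) : Pt := (t, t ^ 2)

theorem parabolaPt_mem_parabola (t : ℝ) : parabolaPt t ∈ parabola := rfl

theorem continuous_parabolaPt : Continuous parabolaPt := by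
  unfold parabolaPt
  fun_prop

theorem parabolaPt_injective : Function.Injective parabolaPt :=
  fun _ _ h => congrArg Prod.fst h

def redPts (n : ℕ) : Finset Pt := (Finset.range n).image fun k => parabolaPt (2 * k : ℕ)

def bluePts (n : ℕ) : Finset Pt := (Finset.range n).image fun k => parabolaPt (2 * k + 1 : ℕ)

theorem card_redPts (n : ℕ) : (redPts n).card = n := by
  rw [redPts, Finset.card_image_of_injective, Finset.card_range]
  exact fun a b h => by simpa using parabolaPt_injective h

theorem card_bluePts (n : ℕ) : (bluePts n).card = n := by
  rw [bluePts, Finset.card_image_of_injective, Finset.card_range]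
  exact fun a b h => by simpa using parabolaPt_injective h

theorem disjoint_bluePts_redPts (n : ℕ) : Disjoint (bluePts n) (redPts n) := by
  refine Finset.disjoint_left.2 ?_
  rintro _ hb hr
  obtain ⟨k, -, rfl⟩ := Finset.mem_image.1 hb
  obtain ⟨l, -, h⟩ := Finset.mem_image.1 hr
  have : 2 * l = 2 * k + 1 := by exact_mod_cast parabolaPt_injective h
  omega

theorem coe_union_bluePts_redPts_subset (n : ℕ) : ↑(bluePts n ∪ redPts n) ⊆ parabola := by
  intro p hp
  rcases Finset.mem_union.1 hp with h | h <;>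
    obtain ⟨k, -, rfl⟩ := Finset.mem_image.1 h <;> exact parabolaPt_mem_parabola _

theorem parabolaPt_mem_redPts {n k : ℕ} (hk : k < 2 * n) (he : Even k) :
    parabolaPt k ∈ redPts n := by
  obtain ⟨j, rfl⟩ := he
  exact Finset.mem_image.2 ⟨j, Finset.mem_range.2 (by omega), by rw [two_mul]⟩

theorem parabolaPt_mem_bluePts {n k : ℕ} (hk : k < 2 * n) (ho : Odd k) :
    parabolaPt k ∈ bluePts n := by
  obtain ⟨j, rfl⟩ := ho
  exact Finset.mem_image.2 ⟨j, Finset.mem_range.2 (by omega), rfl⟩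

section Crossings

variable {m : ℕ} {v : Fin m → Pt}

theorem exists_parabolaPt_mem_polyCurve {n : ℕ} (hR : ∀ r ∈ redPts n, Encloses v r)
    (hB : ∀ b ∈ bluePts n, Excludes v b) {k : ℕ} (hk : k + 1 < 2 * n) :
    ∃ t ∈ Ioo (k : ℝ) (k + 1), parabolaPt t ∈ polyCurve v := by
  have hout (j : ℕ) (hj : j < 2 * n) : parabolaPt j ∉ polyCurve v := by
    rcases Nat.even_or_odd j with he | ho
    · exact (hR _ (parabolaPt_mem_redPts hj he)).1
    · exact (hB _ (parabolaPt_mem_bluePts hj ho)).1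
  set K := parabolaPt '' Icc (k : ℝ) (k + 1)
  have hK : IsPreconnected K := isPreconnected_Icc.image _ continuous_parabolaPt.continuousOn
  have hkK : parabolaPt k ∈ K := mem_image_of_mem _ (left_mem_Icc.2 (by linarith))
  have hk1K : parabolaPt (k + 1 : ℕ) ∈ K := by
    push_cast
    exact mem_image_of_mem _ (right_mem_Icc.2 (by linarith))
  obtain ⟨_, ⟨t, ht, rfl⟩, hmem⟩ : (K ∩ polyCurve v).Nonempty := by
    rcases Nat.even_or_odd k with he | ho
    · exact inter_nonempty_of_isBounded_connectedComponentIn hK hkK hk1K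
        (hR _ (parabolaPt_mem_redPts (by omega) he)).2
        (hB _ (parabolaPt_mem_bluePts hk he.add_one)).2
    · exact inter_nonempty_of_isBounded_connectedComponentIn hK hk1K hkK
        (hR _ (parabolaPt_mem_redPts hk ho.add_one)).2
        (hB _ (parabolaPt_mem_bluePts (by omega) ho)).2
  refine ⟨t, ⟨ht.1.lt_of_ne ?_, ht.2.lt_of_ne ?_⟩, hmem⟩
  · rintro rfl
    exact hout k (by omega) hmem
  · rintro rfl
    exact hout (k + 1) hk (by push_cast; exact hmem)

theorem le_two_mul_of_forall_exists_parabolaPt_mem_polyCurve {N : ℕ}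
    (h : ∀ k : Fin N, ∃ t ∈ Ioo (k : ℝ) (k + 1), parabolaPt t ∈ polyCurve v) : N ≤ 2 * m := by
  classical
  choose t ht hmem using h
  have ht_inj : Function.Injective t := by
    intro k l hkl
    have hk := ht k
    have hl := ht l
    rw [hkl] at hk
    have hkl' : (k : ℕ) < l + 1 := by exact_mod_cast hk.1.trans hl.2
    have hlk : (l : ℕ) < k + 1 := by exact_mod_cast hl.1.trans hk.2
    exact Fin.ext (by omega)
  calc N = (Finset.univ.image (parabolaPt ∘ t)).card := by
        rw [Finset.card_image_of_injective _ (parabolaPt_injective.comp ht_inj),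
          Finset.card_univ, Fintype.card_fin]
    _ ≤ 2 * m := genPos_parabola.card_le_of_subset_polyCurve v fun _ hx => by
        obtain ⟨k, -, rfl⟩ := Finset.mem_image.1 hx
        exact ⟨parabolaPt_mem_parabola _, hmem k⟩

end Crossings

theorem red_blue_separation_lower_bound_general (n : ℕ) :
    ∃ B R : Finset Pt, Disjoint B R ∧ B.card = n ∧ R.card = n ∧ GenPos ↑(B ∪ R) ∧
      ∀ (m : ℕ) (v : Fin m → Pt), IsSimplePolygon v →
        (∀ r ∈ R, Encloses v r) → (∀ b ∈ B, Excludes v b) → n ≤ m := by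
  have hsub := coe_union_bluePts_redPts_subset n
  refine ⟨bluePts n, redPts n, disjoint_bluePts_redPts n, card_bluePts n, card_redPts n,
    fun p hp q hq r hr => genPos_parabola p (hsub hp) q (hsub hq) r (hsub hr), ?_⟩
  intro m v _ hR hB
  have := le_two_mul_of_forall_exists_parabolaPt_mem_polyCurve (N := 2 * n - 1) fun k =>
    exists_parabolaPt_mem_polyCurve hR hB (k := k) (by omega)
  omega

/-- **Red–blue separation, lower bound (Theorem 5, second part).** For every `n ≥ 1` there
are disjoint sets `B` and `R` of `n` points each with `B ∪ R` in general position such that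
every simple closed polygonal curve enclosing every red point and excluding every blue point
has at least `n` vertices. -/
theorem red_blue_separation_lower_bound (n : ℕ) (hn : 1 ≤ n) :
    ∃ B R : Finset Pt, Disjoint B R ∧ B.card = n ∧ R.card = n ∧ GenPos ↑(B ∪ R) ∧
      ∀ (m : ℕ) (v : Fin m → Pt), IsSimplePolygon v →
        (∀ r ∈ R, Encloses v r) → (∀ b ∈ B, Excludes v b) → n ≤ m :=
  red_blue_separation_lower_bound_general n
end
end

section
/- Let B and R be disjoint finite sets in ℝ² with B ∪ R in general position, |R| = 1 with the unique point of R lying in the interior of the convex hull of B, the convex hull of B having at least 3 extreme points, and at least one point of B lying in the interior of the convex hull of B. Then there exists a polygonization of B that excludes the point of R. -/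
open Set

noncomputable section

/-!
Choose a blue point `b` in the interior of the hull and an affine chart `e` of the plane onto `ℂ`
with `e b = 0` and `e r = -1`, so that the red point is seen from `b` at argument `π` while, by
general position, every other blue point is seen at an argument in `(-π, π)`. List these points
by increasing argument and join them, together with `b`, into the fan `b, q₁, …, qₙ₋₁`.
As `b` is interior, every open half-plane through `b` contains a blue point, so consecutive
`qᵢ, qᵢ₊₁` subtend an angle `< π`; hence each rim edge stays inside its own angular sector and the
fan is a simple polygon. No edge meets the ray from `b` through `r` beyond `r`, which is unbounded,
so `r` lies in the unbounded component of the complement.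
-/

open ComplexConjugate Real

theorem Real.sin_neg_of_pi_lt_of_lt_two_pi {x : ℝ} (h₁ : π < x) (h₂ : x < 2 * π) : sin x < 0 := by
  simpa using sin_neg_of_neg_of_neg_pi_lt (x := x - 2 * π) (by linarith) (by linarith)

theorem mem_Icc_of_sin_sub_nonneg {a₁ a₂ a : ℝ} (h₁ : a₁ ∈ Ioc (-π) π) (h₂ : a₂ ∈ Ioc (-π) π)
    (ha : a ∈ Ioc (-π) π) (hlt : a₁ < a₂) (hs₁ : 0 ≤ sin (a - a₁)) (hs₂ : 0 ≤ sin (a₂ - a)) :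
    a ∈ Icc a₁ a₂ := by
  obtain ⟨h₁l, h₁r⟩ := h₁; obtain ⟨h₂l, h₂r⟩ := h₂; obtain ⟨hal, har⟩ := ha
  constructor <;> by_contra! h
  · rcases lt_or_ge (-π) (a - a₁) with h' | h'
    · exact (sin_neg_of_neg_of_neg_pi_lt (by linarith) h').not_ge hs₁
    · exact (sin_neg_of_pi_lt_of_lt_two_pi (by linarith) (by linarith)).not_ge hs₂
  · rcases lt_or_ge (-π) (a₂ - a) with h' | h'
    · exact (sin_neg_of_neg_of_neg_pi_lt (by linarith) h').not_ge hs₂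
    · exact (sin_neg_of_pi_lt_of_lt_two_pi (by linarith) (by linarith)).not_ge hs₁

namespace Complex

theorem im_conj_mul (z w : ℂ) : (conj z * w).im = ‖z‖ * ‖w‖ * Real.sin (arg w - arg z) := by
  rw [mul_im, conj_re, conj_im, Real.sin_sub, ← norm_mul_cos_arg z, ← norm_mul_sin_arg z,
    ← norm_mul_cos_arg w, ← norm_mul_sin_arg w]
  ring

theorem sin_arg_sub_nonneg {z w : ℂ} (hz : z ≠ 0) (hw : w ≠ 0) (h : 0 ≤ (conj z * w).im) :
    0 ≤ Real.sin (arg w - arg z) := by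
  rw [im_conj_mul] at h
  exact (mul_nonneg_iff_of_pos_left (mul_pos (norm_pos_iff.2 hz) (norm_pos_iff.2 hw))).mp h

theorem arg_mem_Icc_of_mem_segment {c₁ c₂ z : ℂ} (h₁ : c₁ ≠ 0) (h₂ : c₂ ≠ 0)
    (hlt : arg c₁ < arg c₂) (hgap : arg c₂ - arg c₁ < π) (hz : z ∈ segment ℝ c₁ c₂) :
    z ≠ 0 ∧ arg z ∈ Icc (arg c₁) (arg c₂) ∧ (arg z = arg c₁ → z = c₁) ∧
      (arg z = arg c₂ → z = c₂) := by
  obtain ⟨s, t, hs, ht, hst, rfl⟩ := hz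
  have hD : 0 < (conj c₁ * c₂).im := by
    rw [im_conj_mul]
    exact mul_pos (by positivity) (Real.sin_pos_of_pos_of_lt_pi (by linarith) hgap)
  have hcross₁ : (conj c₁ * (s • c₁ + t • c₂)).im = t * (conj c₁ * c₂).im := by
    simp only [mul_add, add_im, mul_im, conj_re, conj_im, smul_re, smul_im, smul_eq_mul]
    ring
  have hcross₂ : (conj (s • c₁ + t • c₂) * c₂).im = s * (conj c₁ * c₂).im := by
    simp only [map_add, add_mul, add_im, mul_im, conj_re, conj_im, smul_re, smul_im, smul_eq_mul]
    ring
  have hz : s • c₁ + t • c₂ ≠ 0 := by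
    intro h0
    rw [h0, mul_zero, zero_im] at hcross₁
    rw [h0, map_zero, zero_mul, zero_im] at hcross₂
    have : t = 0 ∧ s = 0 := ⟨by nlinarith, by nlinarith⟩
    linarith [this.1, this.2]
  refine ⟨hz, mem_Icc_of_sin_sub_nonneg (arg_mem_Ioc _) (arg_mem_Ioc _) (arg_mem_Ioc _) hlt
    (sin_arg_sub_nonneg h₁ hz (by rw [hcross₁]; positivity))
    (sin_arg_sub_nonneg hz h₂ (by rw [hcross₂]; positivity)), fun he => ?_, fun he => ?_⟩
  · rw [im_conj_mul, he, sub_self, Real.sin_zero, mul_zero] at hcross₁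
    obtain rfl : t = 0 := by nlinarith
    obtain rfl : s = 1 := by linarith
    simp
  · rw [im_conj_mul, he, sub_self, Real.sin_zero, mul_zero] at hcross₂
    obtain rfl : s = 0 := by nlinarith
    obtain rfl : t = 1 := by linarith
    simp

theorem arg_mem_Ioo_of_im_conj_mul_pos {c z : ℂ} (hc : arg c ≤ 0) (h : 0 < (conj c * z).im) :
    arg z ∈ Ioo (arg c) (arg c + π) := by
  rw [im_conj_mul] at h
  have hsin : 0 < Real.sin (arg z - arg c) := pos_of_mul_pos_right h (by positivity)
  obtain ⟨hcl, -⟩ := arg_mem_Ioc c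
  obtain ⟨hzl, hzr⟩ := arg_mem_Ioc z
  constructor <;> by_contra! h'
  · exact (Real.sin_nonpos_of_nonpos_of_neg_pi_le (by linarith) (by linarith)).not_gt hsin
  · rcases h'.eq_or_lt with h'' | h''
    · rw [← h'', add_sub_cancel_left, Real.sin_pi] at hsin
      exact hsin.false
    · exact (Real.sin_neg_of_pi_lt_of_lt_two_pi (by linarith) (by linarith)).not_gt hsin

end Complex

open Filter Topology in
theorem exists_lt_of_mem_interior_convexHull {E : Type*} [AddCommGroup E] [Module ℝ E]
    [TopologicalSpace E] [IsTopologicalAddGroup E] [ContinuousSMul ℝ E] {s : Set E} {b : E}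
    (hb : b ∈ interior (convexHull ℝ s)) (f : E →ᵃ[ℝ] ℝ) (hf : ∃ x, f b < f x) :
    ∃ w ∈ s, f b < f w := by
  obtain ⟨x, hx⟩ := hf
  by_contra! hs
  have hsub : convexHull ℝ s ⊆ f ⁻¹' Iic (f b) :=
    convexHull_min hs ((convex_Iic _).affine_preimage f)
  have hnear : ∀ᶠ t in 𝓝[>] (0 : ℝ), AffineMap.lineMap b x t ∈ convexHull ℝ s := by
    refine nhdsWithin_le_nhds (AffineMap.lineMap_continuous.continuousAt.preimage_mem_nhds ?_)
    simpa using interior_mem_nhds.mpr (mem_interior_iff_mem_nhds.mp hb)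
  obtain ⟨t, ht, htpos⟩ := (hnear.and self_mem_nhdsWithin).exists
  have hle := hsub ht
  rw [mem_preimage, AffineMap.apply_lineMap, mem_Iic] at hle
  exact hle.not_gt ((left_lt_lineMap_iff_lt htpos).mpr hx)

theorem Finset.exists_bijOn_strictMonoOn_comp {α β : Type*} [Inhabited α] [LinearOrder β]
    (S : Finset α) {f : α → β} (hf : InjOn f S) :
    ∃ q : ℕ → α, BijOn q (Set.Iio S.card) S ∧ StrictMonoOn (f ∘ q) (Set.Iio S.card) := by
  classical
  have hcard : (S.image f).card = S.card := card_image_of_injOn hf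
  set g := (S.image f).orderEmbOfFin hcard
  let q : ℕ → α := fun j => if h : j < S.card then Function.invFunOn f S (g ⟨j, h⟩) else default
  have hg : ∀ j (h : j < S.card), ∃ a ∈ (S : Set α), f a = g ⟨j, h⟩ := fun j h => by
    obtain ⟨a, ha, hfa⟩ := mem_image.mp ((S.image f).orderEmbOfFin_mem hcard ⟨j, h⟩)
    exact ⟨a, ha, hfa⟩
  have hqS : ∀ j (h : j < S.card), q j ∈ S := fun j h => by
    simp only [q, dif_pos h]
    exact Function.invFunOn_mem (hg j h)
  have hfq : ∀ j (h : j < S.card), f (q j) = g ⟨j, h⟩ := fun j h => by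
    simp only [q, dif_pos h]
    exact Function.invFunOn_eq (hg j h)
  have hmono : StrictMonoOn (f ∘ q) (Set.Iio S.card) := fun i hi j hj hij => by
    simp only [Function.comp, hfq i hi, hfq j hj]
    exact g.strictMono (Fin.mk_lt_mk.mpr hij)
  refine ⟨q, ⟨fun j hj => hqS j hj, fun i hi j hj h => hmono.injOn hi hj (congrArg f h),
    fun a ha => ?_⟩, hmono⟩
  obtain ⟨⟨j, hj⟩, hja⟩ : f a ∈ Set.range g := by
    rw [range_orderEmbOfFin, coe_image]
    exact Set.mem_image_of_mem f ha
  exact ⟨j, hj, hf (hqS j hj) ha ((hfq j hj).trans hja)⟩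

section AffineEquiv

variable {k V P W : Type*} [Ring k] [AddCommGroup V] [Module k V] [AddTorsor V P]
  [AddCommGroup W] [Module k W] {e : P ≃ᵃ[k] W} {b : P}

theorem AffineEquiv.apply_ne_zero_of_ne (he : e b = 0) {x : P} (hx : x ≠ b) : e x ≠ 0 :=
  he ▸ e.injective.ne hx

theorem AffineEquiv.apply_lineMap_of_apply_eq_zero (he : e b = 0) (x : P) (t : k) :
    e (AffineMap.lineMap b x t) = t • e x := by
  rw [e.apply_lineMap, he, AffineMap.lineMap_apply_module, smul_zero, zero_add]

end AffineEquiv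

theorem nextIdx_val_of_lt {m : ℕ} {i : Fin m} (h : (i : ℕ) + 1 < m) : (nextIdx i : ℕ) = i + 1 :=
  Nat.mod_eq_of_lt h

theorem nextIdx_val_of_eq {m : ℕ} {i : Fin m} (h : (i : ℕ) + 1 = m) : (nextIdx i : ℕ) = 0 := by
  simp [nextIdx, h]

/-- `θ x` plays the role of the angle under which `x` is seen from the apex `q 0`. -/
structure IsAngularFan (n : ℕ) (q : ℕ → Pt) (θ : Pt → ℝ) : Prop where
  strictMonoOn : StrictMonoOn (θ ∘ q) (Ioo 0 n)
  spoke : ∀ p, ∀ x ∈ segment ℝ (q 0) p, x = q 0 ∨ θ x = θ p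
  rim : ∀ i, 0 < i → i + 1 < n → ∀ x ∈ segment ℝ (q i) (q (i + 1)),
    x ≠ q 0 ∧ θ x ∈ Icc (θ (q i)) (θ (q (i + 1))) ∧ (θ x = θ (q i) → x = q i) ∧
      (θ x = θ (q (i + 1)) → x = q (i + 1))

namespace IsAngularFan

variable {n : ℕ} {q : ℕ → Pt} {θ : Pt → ℝ}

theorem le_iff_le (hF : IsAngularFan n q θ) {i j : ℕ} (hi : i ∈ Ioo 0 n) (hj : j ∈ Ioo 0 n) :
    θ (q i) ≤ θ (q j) ↔ i ≤ j :=
  hF.strictMonoOn.le_iff_le hi hj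

theorem spoke_symm (hF : IsAngularFan n q θ) (p : Pt) {x : Pt} (hx : x ∈ segment ℝ p (q 0)) :
    x = q 0 ∨ θ x = θ p :=
  hF.spoke p x (segment_symm ℝ p (q 0) ▸ hx)

variable (hn : 3 ≤ n)
include hn

theorem ne_apex (hF : IsAngularFan n q θ) {i : ℕ} (hi : i ∈ Ioo 0 n) : q i ≠ q 0 := by
  obtain ⟨hi0, hin⟩ := hi
  by_cases h : i + 1 < n
  · exact (hF.rim i hi0 h (q i) (left_mem_segment ℝ _ _)).1
  · obtain ⟨j, rfl⟩ : ∃ j, i = j + 1 := ⟨i - 1, by omega⟩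
    exact (hF.rim j (by omega) hin _ (right_mem_segment ℝ _ _)).1

theorem injOn (hF : IsAngularFan n q θ) : InjOn q (Iio n) := by
  intro i hi j hj h
  by_contra hij
  wlog hlt : i < j generalizing i j
  · exact this hj hi h.symm (Ne.symm hij) (by omega)
  rcases Nat.eq_zero_or_pos i with rfl | hi0
  · exact hF.ne_apex hn ⟨by omega, hj⟩ h.symm
  · exact (hF.strictMonoOn ⟨hi0, hi⟩ ⟨by omega, hj⟩ hlt).ne (congrArg θ h)

theorem eq_of_mem_edge_inter (hF : IsAngularFan n q θ) {i j : ℕ} (hij : i < j) (hjn : j < n)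
    {x : Pt} (hxi : x ∈ segment ℝ (q i) (q ((i + 1) % n)))
    (hxj : x ∈ segment ℝ (q j) (q ((j + 1) % n))) :
    (j = i + 1 ∧ x = q j) ∨ (i = 0 ∧ j = n - 1 ∧ x = q 0) := by
  have hlast : j + 1 < n ∨ j = n - 1 := by omega
  rcases Nat.eq_zero_or_pos i with rfl | hi0
  · rw [Nat.mod_eq_of_lt (by omega)] at hxi
    rcases hlast with hj | rfl
    · obtain ⟨hx0, ⟨hlo, -⟩, hleft, -⟩ :=
        hF.rim j hij hj x (by rwa [Nat.mod_eq_of_lt hj] at hxj)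
      have hx := (hF.spoke _ x hxi).resolve_left hx0
      obtain rfl : j = 1 :=
        le_antisymm ((hF.le_iff_le ⟨hij, hjn⟩ ⟨one_pos, by omega⟩).mp (hx ▸ hlo)) hij
      exact Or.inl ⟨rfl, hleft hx⟩
    · rw [Nat.sub_add_cancel (by omega), Nat.mod_self] at hxj
      rcases hF.spoke _ x hxi with hx0 | hx
      · exact Or.inr ⟨rfl, rfl, hx0⟩
      rcases hF.spoke_symm _ hxj with hx0 | hx'
      · exact Or.inr ⟨rfl, rfl, hx0⟩
      have := (hF.le_iff_le ⟨hij, hjn⟩ ⟨one_pos, by omega⟩).mp (hx.symm.trans hx').ge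
      omega
  · have hi : i + 1 < n := by omega
    rw [Nat.mod_eq_of_lt hi] at hxi
    obtain ⟨hx0, ⟨-, hhi⟩, -, hright⟩ := hF.rim i hi0 hi x hxi
    have hjx : θ (q j) ≤ θ x := by
      rcases hlast with hj | rfl
      · exact (hF.rim j (by omega) hj x (by rwa [Nat.mod_eq_of_lt hj] at hxj)).2.1.1
      · rw [Nat.sub_add_cancel (by omega), Nat.mod_self] at hxj
        exact ((hF.spoke_symm _ hxj).resolve_left hx0).ge
    obtain rfl : j = i + 1 :=
      le_antisymm ((hF.le_iff_le ⟨by omega, hjn⟩ ⟨by omega, hi⟩).mp (hjx.trans hhi)) hij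
    exact Or.inl ⟨rfl, hright (le_antisymm hhi hjx)⟩

theorem isSimplePolygon (hF : IsAngularFan n q θ) : IsSimplePolygon (fun i : Fin n => q i) := by
  refine ⟨hn, fun i j h => Fin.ext (hF.injOn hn i.2 j.2 h), fun i => ?_, fun i j hij hji hij' => ?_⟩
  · refine Subset.antisymm (fun x ⟨hxi, hxn⟩ => ?_)
      (singleton_subset_iff.mpr ⟨right_mem_segment ℝ _ _, left_mem_segment ℝ _ _⟩)
    have hi := i.2
    rcases Nat.lt_or_ge ((i : ℕ) + 1) n with hlt | hge
    · have hnext := nextIdx_val_of_lt hlt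
      rcases hF.eq_of_mem_edge_inter hn (by omega) (nextIdx i).2 hxi hxn with ⟨-, hx⟩ | ⟨hi0, hlast, -⟩
      · exact hx
      · omega
    · have hnext := nextIdx_val_of_eq (by omega : (i : ℕ) + 1 = n)
      rcases hF.eq_of_mem_edge_inter hn (by omega) hi hxn hxi with ⟨hsucc, -⟩ | ⟨-, -, hx⟩
      · omega
      · rw [mem_singleton_iff, hx, ← hnext]
  · rw [eq_empty_iff_forall_notMem]
    rintro x ⟨hxi, hxj⟩
    wlog hlt : (i : ℕ) < j generalizing i j
    · exact this j i (Ne.symm hij) hij' hji hxj hxi (by omega)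
    rcases hF.eq_of_mem_edge_inter hn hlt j.2 hxi hxj with ⟨h, -⟩ | ⟨h, hjn, -⟩
    · exact hji (Fin.ext (by rw [nextIdx_val_of_lt (by omega)]; exact h))
    · exact hij' (Fin.ext (by rw [nextIdx_val_of_eq (by omega)]; exact h))

theorem mem_polyCurve (hF : IsAngularFan n q θ) {x : Pt}
    (hx : x ∈ polyCurve (fun i : Fin n => q i)) : x = q 0 ∨ θ x ≤ θ (q (n - 1)) := by
  obtain ⟨i, hxi⟩ := mem_iUnion.mp hx
  change x ∈ segment ℝ (q i) (q ((i + 1) % n)) at hxi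
  have hi := i.2
  have hle : ∀ j ∈ Ioo 0 n, θ (q j) ≤ θ (q (n - 1)) := fun j ⟨hj0, hjn⟩ =>
    (hF.le_iff_le ⟨hj0, hjn⟩ ⟨by omega, by omega⟩).mpr (by omega)
  rcases Nat.eq_zero_or_pos i with h0 | hi0
  · rw [h0, Nat.mod_eq_of_lt (by omega)] at hxi
    exact (hF.spoke _ x hxi).imp_right fun h => h.le.trans (hle 1 ⟨one_pos, by omega⟩)
  rcases Nat.lt_or_ge ((i : ℕ) + 1) n with h | h
  · rw [Nat.mod_eq_of_lt h] at hxi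
    exact Or.inr ((hF.rim i hi0 h x hxi).2.1.2.trans (hle _ ⟨by omega, h⟩))
  · rw [show (i : ℕ) + 1 = n by omega, Nat.mod_self, show (i : ℕ) = n - 1 by omega] at hxi
    exact (hF.spoke_symm _ hxi).imp_right le_of_eq

end IsAngularFan

theorem excludes_of_forall_lineMap_notMem {m : ℕ} {v : Fin m → Pt} {b p : Pt} (hbp : b ≠ p)
    (h : ∀ t : ℝ, 1 ≤ t → AffineMap.lineMap b p t ∉ polyCurve v) : Excludes v p := by
  have hp : p ∈ AffineMap.lineMap b p '' Ici (1 : ℝ) :=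
    ⟨1, mem_Ici.mpr le_rfl, AffineMap.lineMap_apply_one _ _⟩
  have hray : AffineMap.lineMap b p '' Ici (1 : ℝ) ⊆ connectedComponentIn (polyCurve v)ᶜ p :=
    (isPreconnected_Ici.image _ AffineMap.lineMap_continuous.continuousOn).subset_connectedComponentIn
      hp (by rintro _ ⟨t, ht, rfl⟩; exact h t ht)
  refine ⟨by simpa using h 1 le_rfl, fun hbdd => ?_⟩
  obtain ⟨C, hC⟩ := (Metric.isBounded_iff_subset_closedBall b).mp (hbdd.subset hray)
  have hd : 0 < dist b p := dist_pos.mpr hbp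
  have hC0 : 0 ≤ C := dist_nonneg.trans (Metric.mem_closedBall.mp (hC hp))
  set t := (C + 1) / dist b p + 1
  have ht : 1 ≤ t := le_add_of_nonneg_left (div_nonneg (by linarith) hd.le)
  have hfar := Metric.mem_closedBall.mp (hC ⟨t, ht, rfl⟩)
  rw [dist_lineMap_left, Real.norm_of_nonneg (by linarith)] at hfar
  have : t * dist b p = C + 1 + dist b p := by simp only [t]; field_simp
  linarith

section StarPolygon

open Complex

variable {e : Pt ≃ᵃ[ℝ] ℂ} {b : Pt}

theorem arg_apply_eq_of_mem_segment (he : e b = 0) {p x : Pt} (hx : x ∈ segment ℝ b p) :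
    x = b ∨ arg (e x) = arg (e p) := by
  rw [segment_eq_image_lineMap] at hx
  obtain ⟨t, ⟨ht0, -⟩, rfl⟩ := hx
  rcases ht0.eq_or_lt with rfl | ht
  · exact Or.inl (AffineMap.lineMap_apply_zero _ _)
  · rw [e.apply_lineMap_of_apply_eq_zero he, real_smul, arg_real_mul _ ht]
    exact Or.inr rfl

theorem collinear_of_arg_apply_eq (he : e b = 0) {x y : Pt} (hx : x ≠ b) (hy : y ≠ b)
    (h : arg (e x) = arg (e y)) : Collinear ℝ ({b, x, y} : Set Pt) := by
  have hxy := (arg_eq_arg_iff (e.apply_ne_zero_of_ne he hx) (e.apply_ne_zero_of_ne he hy)).mp h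
  have hy : y = AffineMap.lineMap b x (‖e y‖ / ‖e x‖) := e.injective (by
    rw [e.apply_lineMap_of_apply_eq_zero he, real_smul]
    push_cast
    exact hxy.symm)
  rw [pair_comm, insert_comm, hy]
  exact collinear_insert_of_mem_affineSpan_pair (AffineMap.lineMap_mem_affineSpan_pair _ _ _)

theorem mem_segment_rim (he : e b = 0) {p₁ p₂ : Pt} (h₁ : p₁ ≠ b) (h₂ : p₂ ≠ b)
    (hlt : arg (e p₁) < arg (e p₂)) (hgap : arg (e p₂) - arg (e p₁) < π) {x : Pt}
    (hx : x ∈ segment ℝ p₁ p₂) :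
    x ≠ b ∧ arg (e x) ∈ Icc (arg (e p₁)) (arg (e p₂)) ∧ (arg (e x) = arg (e p₁) → x = p₁) ∧
      (arg (e x) = arg (e p₂) → x = p₂) := by
  have hex : e x ∈ segment ℝ (e p₁) (e p₂) :=
    image_segment ℝ e.toAffineMap p₁ p₂ ▸ mem_image_of_mem e hx
  obtain ⟨hne, hmem, heq₁, heq₂⟩ := arg_mem_Icc_of_mem_segment
    (e.apply_ne_zero_of_ne he h₁) (e.apply_ne_zero_of_ne he h₂) hlt hgap hex
  exact ⟨fun h => hne (h ▸ he), hmem, fun h => e.injective (heq₁ h), fun h => e.injective (heq₂ h)⟩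

/-- Otherwise the open half-plane to the left of `b p₁` would contain no point of `B`, although `b`
is interior. -/
theorem arg_apply_sub_lt_pi (he : e b = 0) {B : Set Pt} (hb : b ∈ interior (convexHull ℝ B))
    {p₁ p₂ : Pt} (h₁ : p₁ ≠ b)
    (hgap : ∀ w ∈ B, w ≠ b → arg (e w) ∉ Ioo (arg (e p₁)) (arg (e p₂))) :
    arg (e p₂) - arg (e p₁) < π := by
  by_contra! hge
  set c := e p₁
  have hc : c ≠ 0 := e.apply_ne_zero_of_ne he h₁
  let f : Pt →ᵃ[ℝ] ℝ := (imLm.comp (LinearMap.mulLeft ℝ (conj c))).toAffineMap.comp e.toAffineMap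
  have hf : ∀ x, f x = (conj c * e x).im := fun x => rfl
  obtain ⟨w, hwB, hw⟩ := exists_lt_of_mem_interior_convexHull hb f ⟨e.symm (c * I), by
    rw [hf, hf, he, e.apply_symm_apply, mul_zero, zero_im, ← mul_assoc, conj_mul', mul_I_im]
    exact_mod_cast pow_pos (norm_pos_iff.mpr hc) 2⟩
  rw [hf, hf, he, mul_zero, zero_im] at hw
  have hwb : w ≠ b := by
    rintro rfl
    simp [he] at hw
  obtain ⟨hlo, hhi⟩ := arg_mem_Ioo_of_im_conj_mul_pos (by linarith [arg_le_pi (e p₂)]) hw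
  exact hgap w hwB hwb ⟨hlo, hhi.trans_le (by linarith)⟩

theorem exists_isAngularFan {B : Finset Pt} (hb : b ∈ B)
    (hbint : b ∈ interior (convexHull ℝ (B : Set Pt))) (he : e b = 0)
    (hinj : InjOn (fun x => arg (e x)) (B.erase b)) :
    ∃ Q : ℕ → Pt, IsAngularFan B.card Q (fun x => arg (e x)) ∧ Q 0 = b ∧
      Q '' Iio B.card = B ∧ MapsTo Q (Ioo 0 B.card) (B.erase b) := by
  obtain ⟨q, hqS, hqmono⟩ := (B.erase b).exists_bijOn_strictMonoOn_comp hinj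
  rw [Finset.card_erase_of_mem hb] at hqS hqmono
  have hqb : ∀ j < B.card - 1, q j ≠ b := fun j hj => Finset.ne_of_mem_erase (hqS.mapsTo hj)
  let Q : ℕ → Pt := fun | 0 => b | j + 1 => q j
  have hQS : MapsTo Q (Ioo 0 B.card) (B.erase b) := by
    rintro (_ | j) ⟨hj, hjn⟩
    · omega
    · exact hqS.mapsTo (show j < B.card - 1 by omega)
  refine ⟨Q, ⟨?_, fun p x hx => arg_apply_eq_of_mem_segment he hx, ?_⟩, rfl, ?_, hQS⟩
  · rintro (_ | i) ⟨hi, hin⟩ (_ | j) ⟨hj, hjn⟩ hij <;> try omega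
    exact hqmono (show i < B.card - 1 by omega) (show j < B.card - 1 by omega) (by omega)
  · rintro (_ | i) hi hin x hx
    · omega
    have hlt := hqmono (show i < B.card - 1 by omega) (show i + 1 < B.card - 1 by omega)
      (lt_add_one i)
    refine mem_segment_rim he (hqb i (by omega)) (hqb (i + 1) (by omega)) hlt
      (arg_apply_sub_lt_pi he hbint (hqb i (by omega)) ?_) hx
    rintro w hwB hwb ⟨hlo, hhi⟩
    obtain ⟨m, hm, rfl⟩ := hqS.surjOn (Finset.mem_erase.mpr ⟨hwb, hwB⟩)
    have h₁ := (hqmono.lt_iff_lt (show i < B.card - 1 by omega) hm).mp hlo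
    have h₂ := (hqmono.lt_iff_lt hm (show i + 1 < B.card - 1 by omega)).mp hhi
    omega
  · ext x
    refine ⟨?_, fun hx => ?_⟩
    · rintro ⟨_ | j, hj, rfl⟩
      · exact hb
      · exact Finset.mem_of_mem_erase (hQS ⟨j.succ_pos, hj⟩)
    · by_cases hxb : x = b
      · exact ⟨0, Finset.card_pos.mpr ⟨b, hb⟩, hxb.symm⟩
      · obtain ⟨j, hj, rfl⟩ := hqS.surjOn (Finset.mem_erase.mpr ⟨hxb, hx⟩)
        exact ⟨j + 1, by simp only [mem_Iio] at hj ⊢; omega, rfl⟩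

theorem IsAngularFan.excludes_of_arg_eq_pi {n : ℕ} {Q : ℕ → Pt} (hn : 3 ≤ n)
    (hF : IsAngularFan n Q (fun x => arg (e x))) (he : e (Q 0) = 0)
    (hlast : arg (e (Q (n - 1))) < π) {r : Pt} (hr : arg (e r) = π) :
    Excludes (fun i : Fin n => Q i) r := by
  have hQr : Q 0 ≠ r := by
    rintro rfl
    rw [he, arg_zero] at hr
    exact pi_ne_zero hr.symm
  refine excludes_of_forall_lineMap_notMem hQr fun t ht hmem => ?_
  rcases hF.mem_polyCurve hn hmem with h | h
  · rcases AffineMap.lineMap_eq_left_iff.mp h with h | rfl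
    · exact hQr h
    · linarith
  · rw [e.apply_lineMap_of_apply_eq_zero he, real_smul, arg_real_mul _ (by linarith), hr] at h
    linarith

end StarPolygon

theorem exists_affineEquiv_complex {b r : Pt} (h : b ≠ r) :
    ∃ e : Pt ≃ᵃ[ℝ] ℂ, e b = 0 ∧ e r = -1 := by
  set z := Complex.equivRealProdLm.symm (r - b)
  have hz : z ≠ 0 := by simp [z, sub_eq_zero, Ne.symm h]
  let L : Pt ≃ₗ[ℝ] ℂ := Complex.equivRealProdLm.symm.trans
    ((LinearEquiv.smulOfNeZero ℂ ℂ (-z⁻¹) (by simpa using hz)).restrictScalars ℝ)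
  refine ⟨(AffineEquiv.vaddConst ℝ b).symm.trans L.toAffineEquiv, by simp, ?_⟩
  change (-z⁻¹) • z = -1
  rw [smul_eq_mul, neg_mul, inv_mul_cancel₀ hz]

theorem total_polygonization_one_red_general (B R : Finset Pt) (hdisj : Disjoint B R)
    (hgp : GenPos ↑(B ∪ R)) (hR : R.card = 1)
    (hhull : 3 ≤ (Set.extremePoints ℝ (convexHull ℝ (B : Set Pt))).ncard)
    (hk : 1 ≤ {b ∈ (B : Set Pt) | b ∈ interior (convexHull ℝ (B : Set Pt))}.ncard) :
    ∃ (m : ℕ) (v : Fin m → Pt), IsSimplePolygon v ∧ Set.range v = ↑B ∧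
      ∀ r ∈ R, Excludes v r := by
  obtain ⟨r, rfl⟩ := Finset.card_eq_one.mp hR
  obtain ⟨b, hbB, hbint⟩ := Set.nonempty_of_ncard_ne_zero (Nat.one_le_iff_ne_zero.mp hk)
  have hn : 3 ≤ B.card := hhull.trans <| (Set.ncard_coe_finset B) ▸
    Set.ncard_le_ncard extremePoints_convexHull_subset B.finite_toSet
  have hrB : r ∉ B := Finset.disjoint_singleton_right.mp hdisj
  obtain ⟨e, he, her⟩ := exists_affineEquiv_complex (ne_of_mem_of_not_mem hbB hrB)
  have harg_ne : ∀ x ∈ B.erase b, ∀ y ∈ B ∪ {r}, y ≠ b → x ≠ y →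
      Complex.arg (e x) ≠ Complex.arg (e y) := by
    intro x hx y hy hyb hxy h
    obtain ⟨hxb, hxB⟩ := Finset.mem_erase.mp hx
    exact hgp b (by simp [hbB]) x (by simp [hxB]) y hy hxb.symm hyb.symm hxy
      (collinear_of_arg_apply_eq he hxb hyb h)
  obtain ⟨Q, hF, hQ0, hQB, hQS⟩ := exists_isAngularFan hbB hbint he fun x hx y hy h => by
    by_contra hxy
    exact harg_ne x hx y (by simp [Finset.mem_of_mem_erase hy]) (Finset.ne_of_mem_erase hy) hxy h
  have hlast := hQS (show B.card - 1 ∈ Ioo 0 B.card from ⟨by omega, by omega⟩)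
  refine ⟨B.card, fun i => Q i, hF.isSimplePolygon hn, by rw [← hQB]; ext; simp [Fin.exists_iff], ?_⟩
  simp only [Finset.mem_singleton, forall_eq]
  refine hF.excludes_of_arg_eq_pi hn (hQ0 ▸ he) ((Complex.arg_le_pi _).lt_of_ne ?_)
    (by rw [her, Complex.arg_neg_one])
  simpa [her] using harg_ne _ hlast r (by simp) (ne_of_mem_of_not_mem hbB hrB).symm
    (ne_of_mem_of_not_mem (Finset.mem_of_mem_erase hlast) hrB)

/-- **`K(1) = 1`.** If `B ∪ R` is in general position, `R` consists of a single point lying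
in the interior of the convex hull of `B`, the hull of `B` has at least `3` extreme points,
and at least one point of `B` lies in the interior of the hull of `B`, then some
polygonization of `B` excludes the red point. -/
theorem total_polygonization_one_red (B R : Finset Pt) (hdisj : Disjoint B R)
    (hgp : GenPos ↑(B ∪ R)) (hR : R.card = 1)
    (hint : ∀ r ∈ R, r ∈ interior (convexHull ℝ (B : Set Pt)))
    (hhull : 3 ≤ (Set.extremePoints ℝ (convexHull ℝ (B : Set Pt))).ncard)
    (hk : 1 ≤ {b ∈ (B : Set Pt) | b ∈ interior (convexHull ℝ (B : Set Pt))}.ncard) :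
    ∃ (m : ℕ) (v : Fin m → Pt), IsSimplePolygon v ∧ Set.range v = ↑B ∧
      ∀ r ∈ R, Excludes v r :=
  total_polygonization_one_red_general B R hdisj hgp hR hhull hk
end
end
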